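/- Rate of convergence of average profits: for every n ≥ 1, 0 ≤ p̄_{nΛμ} − p̄_{nΛξ} ≤ p_Δ d_μ/n + √(4 (p_max − p̄_{nΛμ}) p_Δ d_μ/n + (p_Δ d_μ/n)²), where d_μ = ln(1/w_μ); in particular p̄_{nΛμ} − p̄_{nΛξ} = O(n^{−1/2}) as n → ∞. -/

import Mathlib

open Finset Filter

/-- A probability distribution on finite binary strings:
nonnegative, `1` on the empty string, and additive under one-symbol extension. -/
def IsDistr (ρ : List Bool → ℝ) : Prop :=
  (∀ x, 0 ≤ ρ x) ∧ ρ [] = 1 ∧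
    ∀ x, ρ x = ρ (x ++ [false]) + ρ (x ++ [true])

/-- Conditional probability `ρ(b | x) = ρ(xb)/ρ(x)` (junk `0` when `ρ x = 0`). -/
noncomputable def condP (ρ : List Bool → ℝ) (x : List Bool) (b : Bool) : ℝ :=
  ρ (x ++ [b]) / ρ x

/-- Instantaneous relative entropy
`h_t(x) = ∑_b μ(b|x) ln (μ(b|x)/ξ(b|x))` (conventions `0·ln 0 = 0` are automatic
since `Real.log 0 = 0` and `r/0 = 0`). -/
noncomputable def instEnt (μ ξ : List Bool → ℝ) (x : List Bool) : ℝ :=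
  ∑ b : Bool, condP μ x b * Real.log (condP μ x b / condP ξ x b)

/-- Total relative entropy `H_n = ∑_{t=1}^n ∑_{x_{<t}} μ(x_{<t}) h_t(x_{<t})`
(histories of length `t-1`, i.e. length `t ∈ {0,…,n-1}`). -/
noncomputable def totalEnt (μ ξ : List Bool → ℝ) (n : ℕ) : ℝ :=
  ∑ t ∈ Finset.range n, ∑ x : Fin t → Bool,
    μ (List.ofFn x) * instEnt μ ξ (List.ofFn x)

/-- `ρ`-expected loss of predicting `y` after history `x`. -/
noncomputable def expLoss (ρ : List Bool → ℝ) (l : Bool → Bool → ℝ)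
    (x : List Bool) (y : Bool) : ℝ :=
  ∑ b : Bool, condP ρ x b * l b y

/-- `Y` is a fixed choice of minimizers for the scheme `Λ_ρ`. -/
def IsPredictor (ρ : List Bool → ℝ) (l : Bool → Bool → ℝ)
    (Y : List Bool → Bool) : Prop :=
  ∀ x y, expLoss ρ l x (Y x) ≤ expLoss ρ l x y

/-- Total `μ`-expected loss `L_{nΛ}` of the scheme with minimizers `Y`. -/
noncomputable def totalLoss (μ : List Bool → ℝ) (l : Bool → Bool → ℝ)
    (Y : List Bool → Bool) (n : ℕ) : ℝ :=
  ∑ t ∈ Finset.range n, ∑ x : Fin t → Bool,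
    μ (List.ofFn x) * expLoss μ l (List.ofFn x) (Y (List.ofFn x))

/-- `ρ`-expected profit of action `y` after history `x` (the history also
encodes the round `t` via its length). -/
noncomputable def expProfit (ρ : List Bool → ℝ) (p : List Bool → Bool → Bool → ℝ)
    (x : List Bool) (y : Bool) : ℝ :=
  ∑ b : Bool, condP ρ x b * p x b y

/-- `Y` is a fixed choice of maximizers of the `ρ`-expected profit (the scheme `Λ_ρ`). -/
def IsGambler (ρ : List Bool → ℝ) (p : List Bool → Bool → Bool → ℝ)
    (Y : List Bool → Bool) : Prop :=
  ∀ x y, expProfit ρ p x y ≤ expProfit ρ p x (Y x)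

/-- Total `μ`-expected profit `P_{nΛ}` over the first `n` rounds. -/
noncomputable def totalProfit (μ : List Bool → ℝ) (p : List Bool → Bool → Bool → ℝ)
    (Y : List Bool → Bool) (n : ℕ) : ℝ :=
  ∑ t ∈ Finset.range n, ∑ x : Fin t → Bool,
    μ (List.ofFn x) * expProfit μ p (List.ofFn x) (Y (List.ofFn x))

/-- Average `μ`-expected profit per round, `p̄_{nΛ} = P_{nΛ}/n`. -/
noncomputable def avgProfit (μ : List Bool → ℝ) (p : List Bool → Bool → Bool → ℝ)
    (Y : List Bool → Bool) (n : ℕ) : ℝ :=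
  totalProfit μ p Y n / n

/-!
Let `h(x)` be the relative entropy of `μ(·|x)` to `ξ(·|x)`. In a single round, a `ξ`-optimal
action loses, in `μ`-expected profit against any other action, at most `√(2 h p_Δ ℓ)`, where `ℓ`
is the sum of the two actions' `μ`-expected losses `p_max - p`: a two-outcome Pinsker inequality
with the variance `x (1 - x)` bounded only between the two probabilities. Cauchy–Schwarz over
rounds and histories gives `S² ≤ 2 H_n p_Δ (2 (n p_max - P_{nΛμ}) + S)` for the regret
`S = P_{nΛμ} - P_{nΛξ}`, and by the chain rule `H_n` is the relative entropy of `μ` to `ξ` on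
strings of length `n`, at most `ln (1/w_μ)` because `ξ ≥ w_μ μ`. Solving this quadratic
inequality for `S` and dividing by `n` gives the bound.
-/
open Real

noncomputable def binKL (q r : ℝ) : ℝ :=
  q * log (q / r) + (1 - q) * log ((1 - q) / (1 - r))

lemma binKL_one_sub (q r : ℝ) : binKL (1 - q) (1 - r) = binKL q r := by
  simp only [binKL, sub_sub_cancel]
  ring

lemma sub_le_mul_log_div {q r : ℝ} (hq : 0 ≤ q) (hr : 0 ≤ r) (hqr : 0 < q → 0 < r) :
    q - r ≤ q * log (q / r) := by
  rcases hq.eq_or_lt with rfl | hq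
  · simpa using hr
  have h := one_sub_inv_le_log_of_pos (div_pos hq (hqr hq))
  rw [inv_div] at h
  calc q - r = q * (1 - r / q) := by field_simp
    _ ≤ q * log (q / r) := mul_le_mul_of_nonneg_left h hq.le

lemma binKL_nonneg {q r : ℝ} (hq : q ∈ Set.Icc 0 1) (hr : r ∈ Set.Icc 0 1) (h₀ : 0 < q → 0 < r)
    (h₁ : q < 1 → r < 1) : 0 ≤ binKL q r := by
  have e₀ := sub_le_mul_log_div hq.1 hr.1 h₀
  have e₁ := sub_le_mul_log_div (sub_nonneg.2 hq.2) (sub_nonneg.2 hr.2)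
    (fun h => sub_pos.2 (h₁ (sub_pos.1 h)))
  rw [binKL]
  linarith

lemma sq_sub_le_two_mul_binKL {q r c : ℝ} (hr : 0 < r) (hrq : r < q) (hq : q ≤ 1)
    (hc : ∀ x ∈ Set.Icc r q, x * (1 - x) ≤ c) : (q - r) ^ 2 ≤ 2 * c * binKL q r := by
  set F : ℝ → ℝ := fun x => 2 * c * (q * log x + (1 - q) * log (1 - x)) + (q - x) ^ 2
  have hF_cont : ContinuousOn F (Set.Icc r q) := by
    have hlog₁ : ContinuousOn (fun x => (1 - q) * log (1 - x)) (Set.Icc r q) := by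
      rcases hq.eq_or_lt with rfl | hq
      · simpa using continuousOn_const
      · exact continuousOn_const.mul <|
          ContinuousOn.log (f := fun x => 1 - x) (by fun_prop) fun x hx => by linarith [hx.2]
    have hlog₀ : ContinuousOn (fun x => q * log x) (Set.Icc r q) :=
      continuousOn_const.mul <| ContinuousOn.log (f := id) (by fun_prop) fun x hx => by
        simp only [id]; linarith [hx.1]
    exact (continuousOn_const.mul (hlog₀.add hlog₁)).add (by fun_prop)
  -- `F' x = 2 (q - x) (c / (x (1 - x)) - 1) ≥ 0` on `(r, q)`.
  have hF_mono : MonotoneOn F (Set.Icc r q) := by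
    refine monotoneOn_of_hasDerivWithinAt_nonneg (convex_Icc r q) hF_cont
      (f' := fun x => 2 * c * (q / x - (1 - q) / (1 - x)) - 2 * (q - x))
      (fun x hx => ?_) (fun x hx => ?_) <;> rw [interior_Icc] at hx
    · have hx₀ : x ≠ 0 := by linarith [hx.1]
      have hx₁ : 1 - x ≠ 0 := by linarith [hx.2]
      refine HasDerivAt.hasDerivWithinAt ?_
      have h₀ := ((hasDerivAt_id x).log hx₀).const_mul q
      have h₁ := (((hasDerivAt_id x).const_sub 1).log hx₁).const_mul (1 - q)
      have h₂ := ((hasDerivAt_id x).const_sub q).pow 2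
      convert ((h₀.add h₁).const_mul (2 * c)).add h₂ using 1
      · rfl
      · simp only [id]
        ring
    · have hx₀ : 0 < x := hr.trans hx.1
      have hx₁ : 0 < 1 - x := by linarith [hx.2]
      have hvar : 1 ≤ c / (x * (1 - x)) := (one_le_div (by positivity)).2 (hc x ⟨hx.1.le, hx.2.le⟩)
      have hdiff : q / x - (1 - q) / (1 - x) = (q - x) / (x * (1 - x)) := by
        field_simp
        ring
      have := mul_le_mul_of_nonneg_right hvar (by linarith [hx.2] : 0 ≤ q - x)
      calc (0 : ℝ) ≤ 2 * (c / (x * (1 - x)) * (q - x)) - 2 * (q - x) := by linarith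
        _ = _ := by rw [hdiff]; ring
  have hFrq := hF_mono (Set.left_mem_Icc.2 hrq.le) (Set.right_mem_Icc.2 hrq.le) hrq.le
  have hq₀ : 0 < q := hr.trans hrq
  have hlog₀ : log (q / r) = log q - log r := log_div hq₀.ne' hr.ne'
  have hlog₁ : (1 - q) * log ((1 - q) / (1 - r)) = (1 - q) * (log (1 - q) - log (1 - r)) := by
    rcases hq.eq_or_lt with rfl | hq
    · simp
    · rw [log_div (by linarith) (by linarith)]
  simp only [F, sub_self] at hFrq
  rw [binKL, hlog₀, hlog₁]
  nlinarith

lemma mul_one_sub_le_max_mul {r x q : ℝ} (hr : 0 ≤ r) (hrx : r ≤ x) (hxq : x ≤ q) (hq : q ≤ 1) :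
    x * (1 - x) ≤ max r (1 - r) * (q + r - 2 * q * r) := by
  rcases le_total r (1 / 2) with hr₂ | hr₂
  · rw [max_eq_right (by linarith)]
    rcases le_or_gt (1 - x - r) 0 with h | h
    · nlinarith [mul_nonneg (sub_nonneg.2 hrx) (by linarith : (0:ℝ) ≤ -(1 - x - r)),
        mul_nonneg (hr.trans (hrx.trans hxq)) (by linarith : (0:ℝ) ≤ 1 - 2 * r)]
    · nlinarith [mul_nonneg (sub_nonneg.2 hxq) h.le, mul_nonneg (sub_nonneg.2 hrx) h.le,
        mul_nonneg (by linarith : (0:ℝ) ≤ 1 - 2 * r) (mul_nonneg (sub_nonneg.2 hq) hr)]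
  · rw [max_eq_left (by linarith)]
    nlinarith [mul_nonneg (sub_nonneg.2 hrx) (by linarith : (0:ℝ) ≤ x + r - 1),
      mul_nonneg (mul_nonneg hr (sub_nonneg.2 hq)) (by linarith : (0:ℝ) ≤ 2 * r - 1)]

/-- The `ξ`-optimal action loses `s` more than the other on the outcome of probability `q` and `t`
less on the other outcome; `hopt` says it is not worse under the probability `r`. -/
lemma mul_sub_mul_le_sqrt_binKL {q r s t L : ℝ} (hq : q ≤ 1) (hr : r ≤ 1) (hqr : 0 < q → 0 < r)
    (hs : s ∈ Set.Icc 0 L) (ht : t ∈ Set.Icc 0 L) (hopt : r * s ≤ (1 - r) * t) :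
    q * s - (1 - q) * t ≤ √(2 * binKL q r * L * (q * s + (1 - q) * t)) := by
  set δ := q * s - (1 - q) * t
  rcases le_or_gt δ 0 with hδ | hδ
  · exact hδ.trans (sqrt_nonneg _)
  have hq₀ : 0 < q := by
    by_contra! h
    nlinarith [mul_nonpos_of_nonpos_of_nonneg h hs.1, mul_nonneg (by linarith : 0 ≤ 1 - q) ht.1]
  have hr₀ : 0 < r := hqr hq₀
  have hr₁ : r < 1 := by
    refine hr.lt_of_ne fun h => ?_
    subst h
    have : s = 0 := le_antisymm (by simpa using hopt) hs.1
    simp only [δ, this] at hδ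
    nlinarith [mul_nonneg (by linarith : 0 ≤ 1 - q) ht.1]
  have hopt' := mul_le_mul_of_nonneg_left hopt (by linarith : 0 ≤ 1 - q)
  -- `t` only enters through `(1 - r) * t ≥ r * s`: replacing it by that bound gives both estimates.
  have hδ_le : δ * (1 - r) ≤ s * (q - r) := by nlinarith
  have hA_le : s * (q + r - 2 * q * r) ≤ (1 - r) * (q * s + (1 - q) * t) := by nlinarith
  have hrq : r < q := by nlinarith [mul_pos hδ (sub_pos.2 hr₁), hs.1]
  -- `c` is chosen so that `s * c ≤ L (1 - r) (q + r - 2 q r)` follows from `hopt`.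
  set c := max r (1 - r) * (q + r - 2 * q * r)
  have hkl : (q - r) ^ 2 ≤ 2 * c * binKL q r := sq_sub_le_two_mul_binKL hr₀ hrq hq
    fun x hx => mul_one_sub_le_max_mul hr₀.le hx.1 hx.2 hq
  have hsc : s * c ≤ L * (1 - r) * (q + r - 2 * q * r) := by
    have hmax : s * max r (1 - r) ≤ L * (1 - r) :=
      (mul_max_of_nonneg _ _ hs.1).trans_le
        (max_le (by nlinarith [ht.2]) (by nlinarith [hs.2]))
    have hA : 0 ≤ q + r - 2 * q * r := by nlinarith
    simpa only [c, ← mul_assoc] using mul_le_mul_of_nonneg_right hmax hA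
  have hh : 0 ≤ binKL q r :=
    binKL_nonneg ⟨hq₀.le, hq⟩ ⟨hr₀.le, hr⟩ (fun _ => hr₀) fun _ => hr₁
  refine le_sqrt_of_sq_le (le_of_mul_le_mul_right ?_ (pow_pos (sub_pos.2 hr₁) 2))
  have hL : 0 ≤ L := hs.1.trans hs.2
  calc δ ^ 2 * (1 - r) ^ 2 ≤ s ^ 2 * (q - r) ^ 2 := by
        rw [← mul_pow, ← mul_pow]
        exact pow_le_pow_left₀ (by nlinarith) hδ_le 2
    _ ≤ s * (2 * binKL q r) * (s * c) := by nlinarith [mul_le_mul_of_nonneg_left hkl (sq_nonneg s)]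
    _ ≤ s * (2 * binKL q r) * (L * (1 - r) * (q + r - 2 * q * r)) := by
      gcongr
      nlinarith [hs.1]
    _ ≤ _ := by nlinarith [mul_le_mul_of_nonneg_left hA_le (by
      have := sub_pos.2 hr₁; positivity : 0 ≤ 2 * binKL q r * L * (1 - r))]

/-- Two outcomes with probabilities `(1 - q, q)` under `μ` and `(1 - r, r)` under `ξ`; losses
`a` of an arbitrary action and `b` of a `ξ`-optimal one. -/
lemma sub_le_sqrt_binKL {q r a₀ a₁ b₀ b₁ L : ℝ} (hq : q ∈ Set.Icc 0 1) (hr : r ∈ Set.Icc 0 1)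
    (h₀ : 0 < q → 0 < r) (h₁ : q < 1 → r < 1) (ha₀ : a₀ ∈ Set.Icc 0 L) (ha₁ : a₁ ∈ Set.Icc 0 L)
    (hb₀ : b₀ ∈ Set.Icc 0 L) (hb₁ : b₁ ∈ Set.Icc 0 L)
    (hopt : (1 - r) * b₀ + r * b₁ ≤ (1 - r) * a₀ + r * a₁) :
    (1 - q) * (b₀ - a₀) + q * (b₁ - a₁) ≤
      √(2 * binKL q r * L * ((1 - q) * (a₀ + b₀) + q * (a₁ + b₁))) := by
  wlog h : b₀ ≤ a₀ generalizing q r a₀ a₁ b₀ b₁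
  · have h' : b₁ ≤ a₁ := by
      by_contra! h'
      rw [not_le] at h
      rcases hr.2.lt_or_eq with hr₁ | rfl
      · nlinarith [mul_pos (sub_pos.2 hr₁) (sub_pos.2 h), mul_nonneg hr.1 (sub_pos.2 h').le]
      · linarith
    have := this (q := 1 - q) (r := 1 - r) (by constructor <;> linarith [hq.1, hq.2])
      (by constructor <;> linarith [hr.1, hr.2]) (by intro; linarith [h₁ (by linarith)])
      (by intro; linarith [h₀ (by linarith)]) ha₁ ha₀ hb₁ hb₀ (by linarith) h'
    rw [binKL_one_sub] at this
    convert this using 1 <;> ring_nf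
  rcases le_or_gt b₁ a₁ with h' | h'
  · refine le_trans ?_ (sqrt_nonneg _)
    nlinarith [hq.1, hq.2]
  have key := mul_sub_mul_le_sqrt_binKL hq.2 hr.2 h₀ (s := b₁ - a₁) (t := a₀ - b₀) (L := L)
    ⟨by linarith, by linarith [hb₁.2, ha₁.1]⟩ ⟨by linarith, by linarith [ha₀.2, hb₀.1]⟩
    (by linarith)
  have hKL : 0 ≤ 2 * binKL q r * L :=
    mul_nonneg (mul_nonneg two_pos.le (binKL_nonneg hq hr h₀ h₁)) (ha₀.1.trans ha₀.2)
  calc (1 - q) * (b₀ - a₀) + q * (b₁ - a₁) = q * (b₁ - a₁) - (1 - q) * (a₀ - b₀) := by ring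
    _ ≤ _ := key
    _ ≤ _ := by
      refine sqrt_le_sqrt (mul_le_mul_of_nonneg_left ?_ hKL)
      nlinarith [hq.1, hq.2, ha₀.1, hb₀.1, ha₁.1, hb₁.1]

lemma List.ofFn_snoc {α : Type*} {t : ℕ} (x : Fin t → α) (b : α) :
    List.ofFn (Fin.snoc x b : Fin (t + 1) → α) = List.ofFn x ++ [b] := by
  rw [List.ofFn_succ']
  simp

lemma sum_ofFn_succ {M : Type*} [AddCommMonoid M] (f : List Bool → M) (t : ℕ) :
    ∑ x : Fin (t + 1) → Bool, f (List.ofFn x) =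
      ∑ x : Fin t → Bool, (f (List.ofFn x ++ [false]) + f (List.ofFn x ++ [true])) := by
  rw [← (Fin.snocEquiv fun _ => Bool).sum_comp, Fintype.sum_prod_type, Finset.sum_comm]
  refine Finset.sum_congr rfl fun x _ => ?_
  rw [Fintype.sum_bool, add_comm]
  show f (List.ofFn (Fin.snoc x false)) + f (List.ofFn (Fin.snoc x true)) = _
  rw [List.ofFn_snoc, List.ofFn_snoc]

namespace IsDistr

variable {μ : List Bool → ℝ}

lemma sum_ofFn (hμ : IsDistr μ) (t : ℕ) : ∑ x : Fin t → Bool, μ (List.ofFn x) = 1 := by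
  induction t with
  | zero => simpa using hμ.2.1
  | succ t ih => rw [sum_ofFn_succ, ← ih]; exact Finset.sum_congr rfl fun x _ => (hμ.2.2 _).symm

lemma condP_false (hμ : IsDistr μ) {x : List Bool} (hx : μ x ≠ 0) :
    condP μ x false = 1 - condP μ x true := by
  rw [eq_sub_iff_add_eq, condP, condP, ← add_div, ← hμ.2.2, div_self hx]

lemma condP_mem_Icc (hμ : IsDistr μ) {x : List Bool} (hx : μ x ≠ 0) :
    condP μ x true ∈ Set.Icc 0 1 := by
  have := hμ.condP_false hx
  have h₀ b : 0 ≤ condP μ x b := div_nonneg (hμ.1 _) (hμ.1 _)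
  exact ⟨h₀ true, by linarith [h₀ false]⟩

lemma of_hasSum {ι : Type*} {μs : ι → List Bool → ℝ} {w : ι → ℝ} {ξ : List Bool → ℝ}
    (hμs : ∀ i, IsDistr (μs i)) (hw : ∀ i, 0 ≤ w i) (hw1 : HasSum w 1)
    (hξ : ∀ x, HasSum (fun i => w i * μs i x) (ξ x)) : IsDistr ξ := by
  refine ⟨fun x => (hξ x).nonneg fun i => mul_nonneg (hw i) ((hμs i).1 x), ?_, fun x => ?_⟩
  · exact (hξ []).unique (by simpa [(hμs _).2.1] using hw1)
  · refine (hξ x).unique ?_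
    simpa [(hμs _).2.2 x, mul_add] using (hξ (x ++ [false])).add (hξ (x ++ [true]))

end IsDistr

lemma condP_pos_of_pos {μ ξ : List Bool → ℝ}
    (hdom : ∀ x, 0 < μ x → 0 < ξ x) {x : List Bool} (hx : 0 < μ x) {b : Bool}
    (h : 0 < condP μ x b) : 0 < condP ξ x b := by
  refine div_pos (hdom _ ?_) (hdom _ hx)
  rw [condP, div_pos_iff_of_pos_right hx] at h
  exact h

/-- The `μ`-expected total of `f` over the first `n` rounds; `totalProfit μ p Y` and
`totalEnt μ ξ` are definitionally instances of it. -/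
noncomputable def cumExp (μ f : List Bool → ℝ) (n : ℕ) : ℝ :=
  ∑ t ∈ Finset.range n, ∑ x : Fin t → Bool, μ (List.ofFn x) * f (List.ofFn x)

lemma mul_nonneg_of_pos_imp {a b : ℝ} (ha : 0 ≤ a) (hb : 0 < a → 0 ≤ b) : 0 ≤ a * b := by
  rcases ha.eq_or_lt with h | h
  · simp [← h]
  · exact mul_nonneg h.le (hb h)

section cumExp

variable {μ : List Bool → ℝ} {n : ℕ}

lemma cumExp_sub (f g : List Bool → ℝ) :
    cumExp μ (fun x => f x - g x) n = cumExp μ f n - cumExp μ g n := by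
  simp only [cumExp, mul_sub, Finset.sum_sub_distrib]

lemma cumExp_const_mul (c : ℝ) (f : List Bool → ℝ) :
    cumExp μ (fun x => c * f x) n = c * cumExp μ f n := by
  simp only [cumExp, Finset.mul_sum, mul_left_comm]

lemma IsDistr.cumExp_const (hμ : IsDistr μ) (c : ℝ) : cumExp μ (fun _ => c) n = n * c := by
  simp [cumExp, ← Finset.sum_mul, hμ.sum_ofFn]

lemma cumExp_nonneg (hμ : ∀ x, 0 ≤ μ x) {f : List Bool → ℝ} (hf : ∀ x, 0 < μ x → 0 ≤ f x) :
    0 ≤ cumExp μ f n :=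
  Finset.sum_nonneg fun _ _ => Finset.sum_nonneg fun _ _ => mul_nonneg_of_pos_imp (hμ _) (hf _)

lemma cumExp_mono (hμ : ∀ x, 0 ≤ μ x) {f g : List Bool → ℝ} (h : ∀ x, 0 < μ x → f x ≤ g x) :
    cumExp μ f n ≤ cumExp μ g n :=
  sub_nonneg.1 <| cumExp_sub g f ▸ cumExp_nonneg hμ fun x hx => sub_nonneg.2 (h x hx)

lemma cumExp_le_sqrt_mul_sqrt (hμ : ∀ x, 0 ≤ μ x) {u e g : List Bool → ℝ}
    (he : ∀ x, 0 < μ x → 0 ≤ e x) (hg : ∀ x, 0 < μ x → 0 ≤ g x)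
    (hu : ∀ x, 0 < μ x → u x ≤ √(e x * g x)) :
    cumExp μ u n ≤ √(cumExp μ e n) * √(cumExp μ g n) := by
  have hpos {f : List Bool → ℝ} (hf : ∀ x, 0 < μ x → 0 ≤ f x) x : 0 ≤ μ x * f x :=
    mul_nonneg_of_pos_imp (hμ x) (hf x)
  have hpt x : μ x * u x ≤ √(μ x * e x) * √(μ x * g x) := by
    rcases (hμ x).eq_or_lt with h | h
    · simp [← h]
    · rw [← sqrt_mul (hpos he x), show μ x * e x * (μ x * g x) = μ x ^ 2 * (e x * g x) by ring,
        sqrt_mul (sq_nonneg _), sqrt_sq h.le]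
      exact mul_le_mul_of_nonneg_left (hu x h) h.le
  calc cumExp μ u n
      ≤ ∑ t ∈ Finset.range n, ∑ x : Fin t → Bool,
          √(μ (List.ofFn x) * e (List.ofFn x)) * √(μ (List.ofFn x) * g (List.ofFn x)) :=
        Finset.sum_le_sum fun t _ => Finset.sum_le_sum fun x _ => hpt _
    _ ≤ ∑ t ∈ Finset.range n, √(∑ x : Fin t → Bool, μ (List.ofFn x) * e (List.ofFn x)) *
          √(∑ x : Fin t → Bool, μ (List.ofFn x) * g (List.ofFn x)) :=
        Finset.sum_le_sum fun t _ =>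
          sum_sqrt_mul_sqrt_le _ (fun _ => hpos he _) fun _ => hpos hg _
    _ ≤ _ := sum_sqrt_mul_sqrt_le _ (fun _ => Finset.sum_nonneg fun _ _ => hpos he _)
          fun _ => Finset.sum_nonneg fun _ _ => hpos hg _

end cumExp

section Entropy

variable {μ ξ : List Bool → ℝ}

lemma IsDistr.instEnt_eq_binKL (hμ : IsDistr μ) (hξ : IsDistr ξ) {x : List Bool}
    (hμx : μ x ≠ 0) (hξx : ξ x ≠ 0) :
    instEnt μ ξ x = binKL (condP μ x true) (condP ξ x true) := by
  rw [instEnt, Fintype.sum_bool, hμ.condP_false hμx, hξ.condP_false hξx, binKL, add_comm]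

lemma IsDistr.condP_dom (hμ : IsDistr μ) (hξ : IsDistr ξ) (hdom : ∀ x, 0 < μ x → 0 < ξ x)
    {x : List Bool} (hx : 0 < μ x) :
    (0 < condP μ x true → 0 < condP ξ x true) ∧ (condP μ x true < 1 → condP ξ x true < 1) := by
  refine ⟨condP_pos_of_pos hdom hx, fun h => ?_⟩
  have := condP_pos_of_pos hdom hx (b := false) (by rw [hμ.condP_false hx.ne']; linarith)
  rw [hξ.condP_false (hdom x hx).ne'] at this
  linarith

lemma IsDistr.instEnt_nonneg (hμ : IsDistr μ) (hξ : IsDistr ξ) (hdom : ∀ x, 0 < μ x → 0 < ξ x)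
    {x : List Bool} (hx : 0 < μ x) : 0 ≤ instEnt μ ξ x := by
  rw [hμ.instEnt_eq_binKL hξ hx.ne' (hdom x hx).ne']
  exact binKL_nonneg (hμ.condP_mem_Icc hx.ne') (hξ.condP_mem_Icc (hdom x hx).ne')
    (hμ.condP_dom hξ hdom hx).1 (hμ.condP_dom hξ hdom hx).2

lemma mul_log_div_append (hμ : ∀ x, 0 ≤ μ x) (hdom : ∀ x, 0 < μ x → 0 < ξ x) {x : List Bool}
    (hx : 0 < μ x) (b : Bool) :
    μ (x ++ [b]) * log (μ (x ++ [b]) / ξ (x ++ [b])) = μ (x ++ [b]) * log (μ x / ξ x) +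
      μ x * (condP μ x b * log (condP μ x b / condP ξ x b)) := by
  have hcond : μ x * condP μ x b = μ (x ++ [b]) := mul_div_cancel₀ _ hx.ne'
  rcases (hμ (x ++ [b])).eq_or_lt with h | h
  · simp [condP, ← h]
  have hξx := hdom x hx
  have hξb := hdom _ h
  rw [← mul_assoc, hcond, ← mul_add, ← log_mul (by positivity) (by simp only [condP]; positivity)]
  congr 2
  simp only [condP]
  field_simp

/-- The chain rule for relative entropy, one symbol at a time. -/
lemma IsDistr.sum_mul_log_div_append (hμ : IsDistr μ) (hdom : ∀ x, 0 < μ x → 0 < ξ x)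
    (x : List Bool) :
    μ (x ++ [false]) * log (μ (x ++ [false]) / ξ (x ++ [false])) +
        μ (x ++ [true]) * log (μ (x ++ [true]) / ξ (x ++ [true])) =
      μ x * log (μ x / ξ x) + μ x * instEnt μ ξ x := by
  rcases (hμ.1 x).eq_or_lt with h | h
  · have h₀ := hμ.1 (x ++ [false])
    have h₁ := hμ.1 (x ++ [true])
    have hsum := hμ.2.2 x
    rw [show μ (x ++ [false]) = 0 by linarith, show μ (x ++ [true]) = 0 by linarith, ← h]
    simp
  rw [mul_log_div_append hμ.1 hdom h, mul_log_div_append hμ.1 hdom h, instEnt,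
    Fintype.sum_bool, hμ.2.2 x]
  ring

lemma IsDistr.totalEnt_eq (hμ : IsDistr μ) (hξ : ξ [] = 1) (hdom : ∀ x, 0 < μ x → 0 < ξ x)
    (n : ℕ) :
    totalEnt μ ξ n =
      ∑ x : Fin n → Bool, μ (List.ofFn x) * log (μ (List.ofFn x) / ξ (List.ofFn x)) := by
  induction n with
  | zero => simp [totalEnt, hμ.2.1, hξ]
  | succ n ih =>
    rw [totalEnt, Finset.sum_range_succ, ← totalEnt, ih,
      sum_ofFn_succ (fun l => μ l * log (μ l / ξ l)), ← Finset.sum_add_distrib]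
    exact Finset.sum_congr rfl fun x _ => (hμ.sum_mul_log_div_append hdom _).symm

lemma IsDistr.totalEnt_le_log (hμ : IsDistr μ) (hξ : ξ [] = 1) {w : ℝ} (hw : 0 < w)
    (hdom : ∀ x, w * μ x ≤ ξ x) (n : ℕ) : totalEnt μ ξ n ≤ log (1 / w) := by
  have hpos x (hx : 0 < μ x) : 0 < ξ x := (mul_pos hw hx).trans_le (hdom x)
  calc totalEnt μ ξ n
      = ∑ x : Fin n → Bool, μ (List.ofFn x) * log (μ (List.ofFn x) / ξ (List.ofFn x)) :=
        hμ.totalEnt_eq hξ hpos n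
    _ ≤ ∑ x : Fin n → Bool, μ (List.ofFn x) * log (1 / w) := by
        refine Finset.sum_le_sum fun x _ => ?_
        rcases (hμ.1 (List.ofFn x)).eq_or_lt with h | h
        · simp [← h]
        refine mul_le_mul_of_nonneg_left (log_le_log (div_pos h (hpos _ h)) ?_) h.le
        rw [div_le_div_iff₀ (hpos _ h) hw]
        linarith [hdom (List.ofFn x)]
    _ = log (1 / w) := by rw [← Finset.sum_mul, hμ.sum_ofFn, one_mul]

end Entropy

lemma add_sqrt_le_div_sqrt {a b X N : ℝ} (hN : 1 ≤ N) (ha : 0 ≤ a) (hb : 0 ≤ b) (hX : X ≤ a) :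
    a * b / N + √(4 * X * a * b / N + (a * b / N) ^ 2) ≤
      (a * b + √(4 * a * (a * b) + (a * b) ^ 2)) / √N := by
  have hN₀ : 0 < N := one_pos.trans_le hN
  have hK : 0 ≤ a * b := mul_nonneg ha hb
  rw [add_div, ← sqrt_div' _ hN₀.le]
  gcongr
  · exact sqrt_le_self_iff.2 (Or.inr hN)
  · rw [div_pow, add_div]
    have hX' : 4 * X * a * b / N ≤ 4 * a * (a * b) / N :=
      div_le_div_of_nonneg_right (by nlinarith [mul_le_mul_of_nonneg_left hX hK]) hN₀.le
    have hN' : (a * b) ^ 2 / N ^ 2 ≤ (a * b) ^ 2 / N :=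
      div_le_div_of_nonneg_left (sq_nonneg _) hN₀ (by nlinarith)
    exact add_le_add hX' hN'

section Profit

variable {μ ξ : List Bool → ℝ} {p : List Bool → Bool → Bool → ℝ} {pmax pΔ : ℝ}

lemma IsDistr.expProfit_eq (hμ : IsDistr μ) {x : List Bool} (hx : μ x ≠ 0) (y : Bool) :
    expProfit μ p x y = (1 - condP μ x true) * p x false y + condP μ x true * p x true y := by
  rw [expProfit, Fintype.sum_bool, hμ.condP_false hx, add_comm]

lemma IsDistr.expProfit_mem_Icc (hμ : IsDistr μ) (hp : ∀ x a y, p x a y ∈ Set.Icc (pmax - pΔ) pmax)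
    {x : List Bool} (hx : μ x ≠ 0) (y : Bool) :
    expProfit μ p x y ∈ Set.Icc (pmax - pΔ) pmax := by
  have hq := hμ.condP_mem_Icc hx
  rw [hμ.expProfit_eq hx]
  have h₀ := sub_nonneg.2 hq.2
  have hf := hp x false y
  have ht := hp x true y
  constructor
  · nlinarith [mul_le_mul_of_nonneg_left hf.1 h₀, mul_le_mul_of_nonneg_left ht.1 hq.1]
  · nlinarith [mul_le_mul_of_nonneg_left hf.2 h₀, mul_le_mul_of_nonneg_left ht.2 hq.1]

lemma IsDistr.expProfit_sub_le_sqrt (hμ : IsDistr μ) (hξ : IsDistr ξ)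
    (hdom : ∀ x, 0 < μ x → 0 < ξ x) (hp : ∀ x a y, p x a y ∈ Set.Icc (pmax - pΔ) pmax)
    {Yξ : List Bool → Bool} (hYξ : IsGambler ξ p Yξ) {x : List Bool} (hx : 0 < μ x) (y : Bool) :
    expProfit μ p x y - expProfit μ p x (Yξ x) ≤
      √(2 * instEnt μ ξ x * (pΔ * (2 * pmax - expProfit μ p x y - expProfit μ p x (Yξ x)))) := by
  have hξx := (hdom x hx).ne'
  have hloss a y : pmax - p x a y ∈ Set.Icc 0 pΔ :=
    ⟨sub_nonneg.2 (hp x a y).2, by linarith [(hp x a y).1]⟩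
  have hopt := hYξ x y
  rw [hξ.expProfit_eq hξx, hξ.expProfit_eq hξx] at hopt
  have key := sub_le_sqrt_binKL (hμ.condP_mem_Icc hx.ne') (hξ.condP_mem_Icc hξx)
    (hμ.condP_dom hξ hdom hx).1 (hμ.condP_dom hξ hdom hx).2 (hloss false y) (hloss true y)
    (hloss false (Yξ x)) (hloss true (Yξ x)) (by linarith)
  rw [hμ.instEnt_eq_binKL hξ hx.ne' hξx, hμ.expProfit_eq hx.ne', hμ.expProfit_eq hx.ne']
  convert key using 2 <;> ring

lemma totalProfit_le_of_isGambler (hμ : ∀ x, 0 ≤ μ x) {Yμ : List Bool → Bool}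
    (hYμ : IsGambler μ p Yμ) (Y : List Bool → Bool) (n : ℕ) :
    totalProfit μ p Y n ≤ totalProfit μ p Yμ n :=
  cumExp_mono hμ fun x _ => hYμ x (Y x)

lemma IsDistr.le_totalProfit (hμ : IsDistr μ) (hp : ∀ x a y, p x a y ∈ Set.Icc (pmax - pΔ) pmax)
    (Y : List Bool → Bool) (n : ℕ) : n * (pmax - pΔ) ≤ totalProfit μ p Y n := by
  rw [← hμ.cumExp_const]
  exact cumExp_mono hμ.1 fun x hx => (hμ.expProfit_mem_Icc hp hx.ne' _).1

lemma le_add_sqrt_of_le_sqrt {S K X : ℝ} (hK : 0 ≤ K) (h : S ≤ √(2 * K * (2 * X + S))) :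
    S ≤ K + √(4 * K * X + K ^ 2) := by
  rcases le_or_gt S 0 with hS | hS
  · exact hS.trans (add_nonneg hK (sqrt_nonneg _))
  have hsq := (le_sqrt' hS).1 h
  linarith [le_sqrt_of_sq_le (show (S - K) ^ 2 ≤ 4 * K * X + K ^ 2 by nlinarith)]

theorem IsDistr.totalProfit_sub_le (hμ : IsDistr μ) (hξ : IsDistr ξ)
    (hdom : ∀ x, 0 < μ x → 0 < ξ x) (hp : ∀ x a y, p x a y ∈ Set.Icc (pmax - pΔ) pmax)
    {Yξ : List Bool → Bool} (hYξ : IsGambler ξ p Yξ) (Y : List Bool → Bool) {n : ℕ} {d : ℝ}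
    (hd : totalEnt μ ξ n ≤ d) :
    totalProfit μ p Y n - totalProfit μ p Yξ n ≤
      pΔ * d + √(4 * (pΔ * d) * (n * pmax - totalProfit μ p Y n) + (pΔ * d) ^ 2) := by
  set P := fun x => expProfit μ p x (Y x)
  set Pξ := fun x => expProfit μ p x (Yξ x)
  set S := totalProfit μ p Y n - totalProfit μ p Yξ n
  have hpΔ : 0 ≤ pΔ := (sub_le_self_iff _).1 (Set.nonempty_Icc.1 ⟨_, hp [] false false⟩)
  have hent : 0 ≤ totalEnt μ ξ n := cumExp_nonneg hμ.1 fun x hx => hμ.instEnt_nonneg hξ hdom hx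
  have hslack : cumExp μ (fun x => pΔ * (2 * pmax - P x - Pξ x)) n =
      pΔ * (2 * (n * pmax - totalProfit μ p Y n) + S) := by
    rw [cumExp_const_mul, cumExp_sub, cumExp_sub, hμ.cumExp_const]
    change pΔ * (n * (2 * pmax) - totalProfit μ p Y n - totalProfit μ p Yξ n) = _
    ring
  have hg x (hx : 0 < μ x) : 0 ≤ pΔ * (2 * pmax - P x - Pξ x) :=
    mul_nonneg hpΔ <| by
      linarith [(hμ.expProfit_mem_Icc hp hx.ne' (Y x)).2, (hμ.expProfit_mem_Icc hp hx.ne' (Yξ x)).2]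
  have hslack_nonneg := hslack ▸ cumExp_nonneg hμ.1 hg (n := n)
  have hCS := cumExp_le_sqrt_mul_sqrt hμ.1 (n := n) (u := fun x => P x - Pξ x)
    (fun x hx => mul_nonneg two_pos.le (hμ.instEnt_nonneg hξ hdom hx)) hg
    (fun x hx => hμ.expProfit_sub_le_sqrt hξ hdom hp hYξ hx (Y x))
  rw [cumExp_sub, cumExp_const_mul, ← sqrt_mul (by positivity), hslack] at hCS
  refine le_add_sqrt_of_le_sqrt (mul_nonneg hpΔ (hent.trans hd)) (hCS.trans (sqrt_le_sqrt ?_))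
  change 2 * totalEnt μ ξ n * _ ≤ _
  nlinarith [mul_le_mul_of_nonneg_right hd hslack_nonneg]

lemma IsDistr.avgProfit_sub_le (hμ : IsDistr μ) (hξ : IsDistr ξ) (hdom : ∀ x, 0 < μ x → 0 < ξ x)
    (hp : ∀ x a y, p x a y ∈ Set.Icc (pmax - pΔ) pmax) {Yξ : List Bool → Bool}
    (hYξ : IsGambler ξ p Yξ) (Y : List Bool → Bool) {n : ℕ} (hn : 0 < n) {d : ℝ}
    (hd : totalEnt μ ξ n ≤ d) :
    avgProfit μ p Y n - avgProfit μ p Yξ n ≤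
      pΔ * d / n + √(4 * (pmax - avgProfit μ p Y n) * pΔ * d / n + (pΔ * d / n) ^ 2) := by
  have hn' : (0 : ℝ) < n := Nat.cast_pos.2 hn
  have harg : 4 * (pmax - totalProfit μ p Y n / n) * pΔ * d / n + (pΔ * d / n) ^ 2 =
      (4 * (pΔ * d) * (n * pmax - totalProfit μ p Y n) + (pΔ * d) ^ 2) / n ^ 2 := by
    field_simp
  simp only [avgProfit]
  rw [harg, sqrt_div' _ (sq_nonneg _), sqrt_sq hn'.le, div_sub_div_same, ← add_div]
  exact div_le_div_of_nonneg_right (hμ.totalProfit_sub_le hξ hdom hp hYξ Y hd) hn'.le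

lemma avgProfit_le_of_isGambler (hμ : ∀ x, 0 ≤ μ x) {Yμ : List Bool → Bool}
    (hYμ : IsGambler μ p Yμ) (Y : List Bool → Bool) (n : ℕ) :
    avgProfit μ p Y n ≤ avgProfit μ p Yμ n :=
  div_le_div_of_nonneg_right (totalProfit_le_of_isGambler hμ hYμ Y n) n.cast_nonneg

lemma IsDistr.le_avgProfit (hμ : IsDistr μ) (hp : ∀ x a y, p x a y ∈ Set.Icc (pmax - pΔ) pmax)
    (Y : List Bool → Bool) {n : ℕ} (hn : 0 < n) : pmax - pΔ ≤ avgProfit μ p Y n := by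
  rw [avgProfit, le_div_iff₀ (Nat.cast_pos.2 hn), mul_comm]
  exact hμ.le_totalProfit hp Y n

end Profit

theorem average_profit_convergence_general {ι : Type*}
    (μs : ι → List Bool → ℝ) (w : ι → ℝ)
    (hμs : ∀ i, IsDistr (μs i)) (hw : ∀ i, 0 < w i) (hw1 : HasSum w 1)
    (ξ : List Bool → ℝ) (hξ : ∀ x, HasSum (fun i => w i * μs i x) (ξ x))
    (i₀ : ι)
    (p : List Bool → Bool → Bool → ℝ) (pmax pΔ : ℝ)
    (hp : ∀ x a y, p x a y ∈ Set.Icc (pmax - pΔ) pmax)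
    (Yμ Yξ : List Bool → Bool)
    (hYμ : IsGambler (μs i₀) p Yμ) (hYξ : IsGambler ξ p Yξ) :
    (∀ n : ℕ, 1 ≤ n →
      0 ≤ avgProfit (μs i₀) p Yμ n - avgProfit (μs i₀) p Yξ n ∧
      avgProfit (μs i₀) p Yμ n - avgProfit (μs i₀) p Yξ n ≤
        pΔ * Real.log (1 / w i₀) / n +
          Real.sqrt (4 * (pmax - avgProfit (μs i₀) p Yμ n) * pΔ * Real.log (1 / w i₀) / n
            + (pΔ * Real.log (1 / w i₀) / n) ^ 2)) ∧
    ∃ C : ℝ, ∀ n : ℕ, 1 ≤ n →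
      avgProfit (μs i₀) p Yμ n - avgProfit (μs i₀) p Yξ n ≤ C / Real.sqrt n := by
  have hξd : IsDistr ξ := .of_hasSum hμs (fun i => (hw i).le) hw1 hξ
  have hdom x : w i₀ * μs i₀ x ≤ ξ x :=
    le_hasSum (hξ x) i₀ fun j _ => mul_nonneg (hw j).le ((hμs j).1 x)
  have hpos x (hx : 0 < μs i₀ x) : 0 < ξ x := (mul_pos (hw i₀) hx).trans_le (hdom x)
  have hbound n (hn : 1 ≤ n) := (hμs i₀).avgProfit_sub_le hξd hpos hp hYξ Yμ hn
    ((hμs i₀).totalEnt_le_log hξd.2.1 (hw i₀) hdom n)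
  have hpΔ : 0 ≤ pΔ := (sub_le_self_iff _).1 (Set.nonempty_Icc.1 ⟨_, hp [] false false⟩)
  have hd : 0 ≤ log (1 / w i₀) :=
    log_nonneg (one_le_one_div (hw i₀) (le_hasSum hw1 i₀ fun j _ => (hw j).le))
  refine ⟨fun n hn => ⟨?_, hbound n hn⟩, pΔ * log (1 / w i₀) +
    √(4 * pΔ * (pΔ * log (1 / w i₀)) + (pΔ * log (1 / w i₀)) ^ 2), fun n hn => ?_⟩
  · exact sub_nonneg.2 (avgProfit_le_of_isGambler (hμs i₀).1 hYμ Yξ n)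
  · exact (hbound n hn).trans <| add_sqrt_le_div_sqrt (Nat.one_le_cast.2 hn) hpΔ hd
      (by linarith [(hμs i₀).le_avgProfit hp Yμ hn])

/-- Theorem 4(i), rate of convergence of average profits:
with profits in `[p_max − p_Δ, p_max]` and `d_μ = ln (1/w_μ)`, for every `n ≥ 1`,
`0 ≤ p̄_{nΛμ} − p̄_{nΛξ} ≤ p_Δ d_μ/n + √(4(p_max − p̄_{nΛμ}) p_Δ d_μ/n + (p_Δ d_μ/n)²)`;
in particular `p̄_{nΛμ} − p̄_{nΛξ} = O(n^{−1/2})`. -/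
theorem average_profit_convergence {ι : Type*} [Countable ι]
    (μs : ι → List Bool → ℝ) (w : ι → ℝ)
    (hμs : ∀ i, IsDistr (μs i)) (hw : ∀ i, 0 < w i) (hw1 : HasSum w 1)
    (ξ : List Bool → ℝ) (hξ : ∀ x, HasSum (fun i => w i * μs i x) (ξ x))
    (i₀ : ι)
    (p : List Bool → Bool → Bool → ℝ) (pmax pΔ : ℝ) (hpΔ : 0 < pΔ)
    (hp : ∀ x a y, p x a y ∈ Set.Icc (pmax - pΔ) pmax)
    (Yμ Yξ : List Bool → Bool)
    (hYμ : IsGambler (μs i₀) p Yμ) (hYξ : IsGambler ξ p Yξ) :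
    (∀ n : ℕ, 1 ≤ n →
      0 ≤ avgProfit (μs i₀) p Yμ n - avgProfit (μs i₀) p Yξ n ∧
      avgProfit (μs i₀) p Yμ n - avgProfit (μs i₀) p Yξ n ≤
        pΔ * Real.log (1 / w i₀) / n +
          Real.sqrt (4 * (pmax - avgProfit (μs i₀) p Yμ n) * pΔ * Real.log (1 / w i₀) / n
            + (pΔ * Real.log (1 / w i₀) / n) ^ 2)) ∧
    ∃ C : ℝ, ∀ n : ℕ, 1 ≤ n →
      avgProfit (μs i₀) p Yμ n - avgProfit (μs i₀) p Yξ n ≤ C / Real.sqrt n :=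
  average_profit_convergence_general μs w hμs hw hw1 ξ hξ i₀ p pmax pΔ hp Yμ Yξ hYμ hYξ
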